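/- arXiv:1602.04193 — 5 statements merged into one kernel-verified Lean document; each statement's English description precedes it below -/
import Mathlib

section
/- In the BQ-CADMM algorithm initialized with x_i^0 = 0 and α_i^0 = 0, the dual variable at each node i is bounded for all iterations k by |α_i^k| ≤ (1 + 6ρ|N_i|)L + |r_i|. -/
/-!
The clipped quantizer takes values in `[-L, L]` and saturates: `Q_b(y) = ±L` once `±y ≥ L`.
With `c = 1 + 2ρ|N_i|`, the primal update reads `α_i^k = A + r_i - c x_i^{k+1}` with
`|A| ≤ 2ρ|N_i|L`, and the dual update adds an increment of size at most `2ρ|N_i|L`. If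
`|x_i^{k+1}| ≤ L` these two facts bound `α_i^{k+1}` directly. If `x_i^{k+1} ≥ L`, the increment
is nonnegative because `Q_b(x_i^{k+1}) = L`, so the lower bound is inherited from `α_i^k`, and
the upper bound follows from the primal identity with `-c x_i^{k+1} ≤ -cL`; the case
`x_i^{k+1} ≤ -L` is symmetric. The bound therefore propagates by induction on `k`.
-/

open Finset

/-- `Q` rounds to the nearest multiple of `Δ`, ties going down. -/
def IsUniformQuantizer (Δ : ℝ) (Q : ℝ → ℝ) : Prop :=
  ∀ x : ℝ, ∃ t : ℤ, Q x = t * Δ ∧ (t - 1/2) * Δ < x ∧ x ≤ (t + 1/2) * Δ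

lemma Int.le_of_sub_half_mul_lt {Δ : ℝ} (hΔ : 0 < Δ) {t m : ℤ}
    (h : (t - 1/2) * Δ < m * Δ) : t ≤ m := by
  have : (t : ℝ) < m + 1 := by linarith [(mul_lt_mul_iff_of_pos_right hΔ).mp h]
  exact_mod_cast Int.lt_add_one_iff.mp (by exact_mod_cast this)

lemma Int.le_of_mul_le_add_half_mul {Δ : ℝ} (hΔ : 0 < Δ) {t m : ℤ}
    (h : m * Δ ≤ (t + 1/2) * Δ) : m ≤ t := by
  have : (m : ℝ) < t + 1 := by linarith [(mul_le_mul_iff_of_pos_right hΔ).mp h]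
  exact_mod_cast Int.lt_add_one_iff.mp (by exact_mod_cast this)

namespace IsUniformQuantizer

variable {Δ : ℝ} {Q : ℝ → ℝ}

lemma apply_int_mul (hQ : IsUniformQuantizer Δ Q) (hΔ : 0 < Δ) (m : ℤ) :
    Q (m * Δ) = m * Δ := by
  obtain ⟨t, hQt, hlo, hhi⟩ := hQ (m * Δ)
  rw [hQt, le_antisymm (Int.le_of_sub_half_mul_lt hΔ hlo) (Int.le_of_mul_le_add_half_mul hΔ hhi)]

lemma abs_apply_le (hQ : IsUniformQuantizer Δ Q) (hΔ : 0 < Δ) {m : ℤ} {z : ℝ}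
    (hz : |z| ≤ m * Δ) : |Q z| ≤ m * Δ := by
  obtain ⟨t, hQt, hlo, hhi⟩ := hQ z
  obtain ⟨hz₁, hz₂⟩ := abs_le.mp hz
  have htm : t ≤ m := Int.le_of_sub_half_mul_lt hΔ (hlo.trans_le hz₂)
  have hmt : -m ≤ t := Int.le_of_mul_le_add_half_mul hΔ (by push_cast; linarith)
  rw [hQt, abs_mul, abs_of_pos hΔ]
  gcongr
  exact_mod_cast abs_le.mpr ⟨hmt, htm⟩

end IsUniformQuantizer

structure IsSaturating (L : ℝ) (q : ℝ → ℝ) : Prop where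
  abs_apply_le : ∀ y, |q y| ≤ L
  apply_eq_of_le : ∀ y, L ≤ y → q y = L
  apply_eq_neg_of_le_neg : ∀ y, y ≤ -L → q y = -L

lemma IsUniformQuantizer.isSaturating_comp_clip {Δ : ℝ} {Q : ℝ → ℝ}
    (hQ : IsUniformQuantizer Δ Q) (hΔ : 0 < Δ) (K : ℕ) :
    IsSaturating (K * Δ) (Q ∘ fun y => max (-(K * Δ)) (min (K * Δ) y)) := by
  have hL : 0 ≤ (K : ℝ) * Δ := by positivity
  refine ⟨fun y => ?_, fun y hy => ?_, fun y hy => ?_⟩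
  · have := hQ.abs_apply_le hΔ (m := K) (z := max (-(K * Δ)) (min (K * Δ) y))
    push_cast at this
    exact this (abs_le.mpr ⟨le_max_left _ _, max_le (by linarith) (min_le_left _ _)⟩)
  · have := hQ.apply_int_mul hΔ K
    push_cast at this
    simpa [min_eq_left hy, max_eq_right (neg_le_self hL)] using this
  · have := hQ.apply_int_mul hΔ (-K)
    push_cast at this
    simpa [min_eq_right (hy.trans (neg_le_self hL)), max_eq_left hy] using this

lemma IsSaturating.nonneg {L : ℝ} {q : ℝ → ℝ} (hq : IsSaturating L q) : 0 ≤ L :=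
  (abs_nonneg _).trans (hq.abs_apply_le 0)

lemma IsSaturating.abs_sum_comp_le {ι : Type*} {L : ℝ} {q : ℝ → ℝ} (hq : IsSaturating L q)
    (s : Finset ι) (f : ι → ℝ) : |∑ j ∈ s, q (f j)| ≤ s.card * L :=
  calc |∑ j ∈ s, q (f j)| ≤ ∑ j ∈ s, |q (f j)| := abs_sum_le_sum_abs _ _
    _ ≤ s.card • L := sum_le_card_nsmul _ _ _ fun j _ => hq.abs_apply_le (f j)
    _ = s.card * L := nsmul_eq_mul _ _

/-- In BQ-CADMM notation `d = |N_i|`, `a = α_i^k`, `x₀ = x_i^k`, `x₁ = x_i^{k+1}`, and `S₀`, `S₁`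
are the sums of the quantized neighbour values at steps `k` and `k + 1`. -/
lemma IsSaturating.abs_dual_step_le {L ρ d r a x₀ x₁ S₀ S₁ : ℝ} {q : ℝ → ℝ}
    (hq : IsSaturating L q) (hρ : 0 ≤ ρ) (hd : 0 ≤ d)
    (hS₀ : |S₀| ≤ d * L) (hS₁ : |S₁| ≤ d * L)
    (hx₁ : (1 + 2 * ρ * d) * x₁ = ρ * d * q x₀ + ρ * S₀ - a + r)
    (ha : |a| ≤ (1 + 6 * ρ * d) * L + |r|) :
    |a + ρ * (d * q x₁ - S₁)| ≤ (1 + 6 * ρ * d) * L + |r| := by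
  have hc : 0 ≤ 1 + 2 * ρ * d := by positivity
  have hq₁ := abs_le.mp (hq.abs_apply_le x₁)
  have hA : |ρ * d * q x₀ + ρ * S₀| ≤ 2 * ρ * d * L :=
    calc |ρ * d * q x₀ + ρ * S₀| ≤ ρ * d * |q x₀| + ρ * |S₀| := by
          simpa only [abs_mul, abs_of_nonneg hρ, abs_of_nonneg hd] using
            abs_add_le (ρ * d * q x₀) (ρ * S₀)
      _ ≤ ρ * d * L + ρ * (d * L) := by gcongr; exact hq.abs_apply_le x₀
      _ = 2 * ρ * d * L := by ring
  have hρS₁ : |ρ * S₁| ≤ ρ * (d * L) := by rw [abs_mul, abs_of_nonneg hρ]; gcongr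
  have := abs_le.mp hρS₁
  have := abs_le.mp hA
  have := abs_le.mp ha
  have := neg_abs_le r
  have := le_abs_self r
  rw [abs_le]
  rcases le_total L x₁ with hx | hx
  · have := mul_le_mul_of_nonneg_left hx hc
    rw [hq.apply_eq_of_le x₁ hx]
    constructor <;> linarith
  rcases le_total x₁ (-L) with hx' | hx'
  · have := mul_le_mul_of_nonneg_left hx' hc
    rw [hq.apply_eq_neg_of_le_neg x₁ hx']
    constructor <;> linarith
  · have := mul_le_mul_of_nonneg_left hx hc
    have := mul_le_mul_of_nonneg_left hx' hc
    have := mul_le_mul_of_nonneg_left hq₁.1 (mul_nonneg hρ hd)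
    have := mul_le_mul_of_nonneg_left hq₁.2 (mul_nonneg hρ hd)
    constructor <;> linarith

theorem stmt_8_general (n : ℕ) (Δ L ρ : ℝ) (hΔ : 0 < Δ) (hρ : 0 < ρ)
    (K : ℕ) (hL : L = K * Δ)
    (N : Fin n → Finset (Fin n)) (r : Fin n → ℝ)
    (Q TX Qb : ℝ → ℝ)
    (hTX : ∀ x : ℝ, TX x = max (-L) (min L x))
    (hQ : ∀ x : ℝ, ∃ t : ℤ, Q x = t * Δ ∧ (t - 1/2) * Δ < x ∧ x ≤ (t + 1/2) * Δ)
    (hQb : Qb = Q ∘ TX)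
    (x α : ℕ → Fin n → ℝ)
    (hα0 : ∀ i, α 0 i = 0)
    (hxup : ∀ k i, x (k+1) i = (1 / (1 + 2 * ρ * (N i).card)) *
      (ρ * (N i).card * Qb (x k i) + ρ * ∑ j ∈ N i, Qb (x k j) - α k i + r i))
    (hαup : ∀ k i, α (k+1) i = α k i +
      ρ * ((N i).card * Qb (x (k+1) i) - ∑ j ∈ N i, Qb (x (k+1) j))) :
    ∀ k i, |α k i| ≤ (1 + 6 * ρ * (N i).card) * L + |r i| := by
  have hsat : IsSaturating L Qb := by
    rw [hQb, funext hTX, hL]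
    exact IsUniformQuantizer.isSaturating_comp_clip hQ hΔ K
  intro k i
  induction k with
  | zero =>
    rw [hα0 i, abs_zero]
    have := hsat.nonneg
    positivity
  | succ k ih =>
    rw [hαup k i]
    refine hsat.abs_dual_step_le (x₀ := x k i) hρ.le (Nat.cast_nonneg _) (hsat.abs_sum_comp_le _ (x k))
      (hsat.abs_sum_comp_le _ (x (k + 1))) ?_ ih
    rw [hxup k i, ← mul_assoc, mul_one_div_cancel (by positivity), one_mul]

/-- In BQ-CADMM initialized with `x_i⁰ = 0` and `α_i⁰ = 0`, the dual variable at each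
node `i` is bounded for all iterations `k` by `|α_i^k| ≤ (1 + 6ρ|N_i|)L + |r_i|`. -/
theorem stmt_8 (n : ℕ) (Δ L ρ : ℝ) (hΔ : 0 < Δ) (hρ : 0 < ρ)
    (K : ℕ) (hK : 1 ≤ K) (hL : L = K * Δ)
    (N : Fin n → Finset (Fin n)) (r : Fin n → ℝ)
    (Q TX Qb : ℝ → ℝ)
    (hTX : ∀ x : ℝ, TX x = max (-L) (min L x))
    (hQ : ∀ x : ℝ, ∃ t : ℤ, Q x = t * Δ ∧ (t - 1/2) * Δ < x ∧ x ≤ (t + 1/2) * Δ)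
    (hQb : Qb = Q ∘ TX)
    (x α : ℕ → Fin n → ℝ)
    (hx0 : ∀ i, x 0 i = 0) (hα0 : ∀ i, α 0 i = 0)
    (hxup : ∀ k i, x (k+1) i = (1 / (1 + 2 * ρ * (N i).card)) *
      (ρ * (N i).card * Qb (x k i) + ρ * ∑ j ∈ N i, Qb (x k j) - α k i + r i))
    (hαup : ∀ k i, α (k+1) i = α k i +
      ρ * ((N i).card * Qb (x (k+1) i) - ∑ j ∈ N i, Qb (x (k+1) j))) :
    ∀ k i, |α k i| ≤ (1 + 6 * ρ * (N i).card) * L + |r i| :=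
  stmt_8_general n Δ L ρ hΔ hρ K hL N r Q TX Qb hTX hQ hQb x α hα0 hxup hαup
end

section
/- In BQ-CADMM, if α_i^k > (1 + 4ρ|N_i|)L + |r_i| then the projection T_X(x_i^{k+1}) = −L, and if α_i^k < −(1 + 4ρ|N_i|)L − |r_i| then T_X(x_i^{k+1}) = L. -/
/-!
The quantized values `Q_b(·)` all lie in `[-L, L]`, so the part of the numerator of the closed-form
update that does not involve `α_i^k` is at most `2ρ|N_i|L + |r_i|` in absolute value. Once `α_i^k`
exceeds that by `(1 + 2ρ|N_i|)L`, the update lies beyond `∓L` and the projection clamps it there.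
-/

lemma max_min_eq_left_of_le {α : Type*} [LinearOrder α] {a b x : α} (h : x ≤ a) :
    max a (min b x) = a :=
  max_eq_left ((min_le_right b x).trans h)

lemma max_min_eq_right_of_le {α : Type*} [LinearOrder α] {a b x : α} (hab : a ≤ b) (h : b ≤ x) :
    max a (min b x) = b := by
  rw [min_eq_left h, max_eq_right hab]

lemma abs_max_neg_min_le {L : ℝ} (hL : 0 ≤ L) (x : ℝ) : |max (-L) (min L x)| ≤ L :=
  abs_le.2 ⟨le_max_left _ _, max_le (by linarith) (min_le_left _ _)⟩

lemma abs_int_mul_le_of_round {Δ y : ℝ} {t K : ℤ} (hΔ : 0 < Δ)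
    (hlo : (t - 1 / 2) * Δ < y) (hhi : y ≤ (t + 1 / 2) * Δ) (hy : |y| ≤ K * Δ) :
    |t * Δ| ≤ K * Δ := by
  rw [abs_le] at hy ⊢
  have ht_lt : (t : ℝ) - 1 / 2 < K := lt_of_mul_lt_mul_right (hlo.trans_le hy.2) hΔ.le
  have ht_gt : (-K : ℝ) ≤ t + 1 / 2 := le_of_mul_le_mul_right (by linarith) hΔ
  have ht_le : t ≤ K := by
    have : (t : ℝ) < K + 1 := by linarith
    exact_mod_cast Int.lt_add_one_iff.mp (by exact_mod_cast this)
  have ht_ge : -K ≤ t := by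
    have : (-K - 1 : ℝ) < t := by linarith
    exact Int.le_of_sub_one_lt (by exact_mod_cast this)
  have ht_le' : (t : ℝ) ≤ K := by exact_mod_cast ht_le
  have ht_ge' : (-K : ℝ) ≤ t := by exact_mod_cast ht_ge
  constructor <;> nlinarith

lemma abs_sum_le_card_mul {ι : Type*} (s : Finset ι) (f : ι → ℝ) {L : ℝ}
    (hf : ∀ i, |f i| ≤ L) : |∑ i ∈ s, f i| ≤ s.card * L :=
  calc |∑ i ∈ s, f i| ≤ ∑ i ∈ s, |f i| := Finset.abs_sum_le_sum_abs _ _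
    _ ≤ ∑ _i ∈ s, L := Finset.sum_le_sum fun i _ => hf i
    _ = s.card * L := by rw [Finset.sum_const, nsmul_eq_mul]

section Update

variable {ρ c L a s α r : ℝ}

lemma update_lt_neg_of_lt (hρ : 0 ≤ ρ) (hc : 0 ≤ c) (ha : |a| ≤ L) (hs : |s| ≤ c * L)
    (hα : (1 + 4 * ρ * c) * L + |r| < α) :
    1 / (1 + 2 * ρ * c) * (ρ * c * a + ρ * s - α + r) < -L := by
  have hρc : 0 ≤ ρ * c := mul_nonneg hρ hc
  have hden : 0 < 1 + 2 * ρ * c := by linarith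
  have ha' : ρ * c * a ≤ ρ * c * L := mul_le_mul_of_nonneg_left (abs_le.1 ha).2 hρc
  have hs' : ρ * s ≤ ρ * (c * L) := mul_le_mul_of_nonneg_left (abs_le.1 hs).2 hρ
  rw [one_div, inv_mul_eq_div, div_lt_iff₀ hden]
  linarith [le_abs_self r]

lemma lt_update_of_lt_neg (hρ : 0 ≤ ρ) (hc : 0 ≤ c) (ha : |a| ≤ L) (hs : |s| ≤ c * L)
    (hα : α < -((1 + 4 * ρ * c) * L) - |r|) :
    L < 1 / (1 + 2 * ρ * c) * (ρ * c * a + ρ * s - α + r) := by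
  have h := update_lt_neg_of_lt (L := L) (a := -a) (s := -s) (α := -α) (r := -r) hρ hc
    (by rwa [abs_neg]) (by rwa [abs_neg]) (by rw [abs_neg]; linarith)
  linarith [show 1 / (1 + 2 * ρ * c) * (ρ * c * -a + ρ * -s - -α + -r)
    = -(1 / (1 + 2 * ρ * c) * (ρ * c * a + ρ * s - α + r)) by ring]

end Update

theorem stmt_9_general (n : ℕ) (Δ L ρ : ℝ) (hΔ : 0 < Δ) (hρ : 0 < ρ)
    (K : ℕ) (hL : L = K * Δ)
    (N : Fin n → Finset (Fin n)) (r : Fin n → ℝ)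
    (Q TX Qb : ℝ → ℝ)
    (hTX : ∀ x : ℝ, TX x = max (-L) (min L x))
    (hQ : ∀ x : ℝ, ∃ t : ℤ, Q x = t * Δ ∧ (t - 1/2) * Δ < x ∧ x ≤ (t + 1/2) * Δ)
    (hQb : Qb = Q ∘ TX)
    (x α : ℕ → Fin n → ℝ)
    (hxup : ∀ k i, x (k+1) i = (1 / (1 + 2 * ρ * (N i).card)) *
      (ρ * (N i).card * Qb (x k i) + ρ * ∑ j ∈ N i, Qb (x k j) - α k i + r i)) :
    ∀ k i,
      (α k i > (1 + 4 * ρ * (N i).card) * L + |r i| → TX (x (k+1) i) = -L) ∧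
      (α k i < -((1 + 4 * ρ * (N i).card) * L) - |r i| → TX (x (k+1) i) = L) := by
  have hL0 : 0 ≤ L := hL ▸ by positivity
  have hQb_le : ∀ y, |Qb y| ≤ L := fun y => by
    obtain ⟨t, hQt, hlo, hhi⟩ := hQ (TX y)
    have hTX_le : |TX y| ≤ ((K : ℤ) : ℝ) * Δ := by
      rw [Int.cast_natCast, ← hL, hTX]; exact abs_max_neg_min_le hL0 y
    rw [hQb, Function.comp_apply, hQt, hL, ← Int.cast_natCast]
    exact abs_int_mul_le_of_round hΔ hlo hhi hTX_le
  intro k i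
  have hsum := abs_sum_le_card_mul (N i) (fun j => Qb (x k j)) fun j => hQb_le _
  have hc : (0 : ℝ) ≤ (N i).card := Nat.cast_nonneg _
  refine ⟨fun hα => ?_, fun hα => ?_⟩
  · rw [hTX, hxup]
    exact max_min_eq_left_of_le (update_lt_neg_of_lt hρ.le hc (hQb_le _) hsum hα).le
  · rw [hTX, hxup]
    exact max_min_eq_right_of_le (by linarith) (lt_update_of_lt_neg hρ.le hc (hQb_le _) hsum hα).le

/-- In BQ-CADMM, if `α_i^k > (1 + 4ρ|N_i|)L + |r_i|` then the projection
`T_X(x_i^{k+1}) = −L`, and if `α_i^k < −(1 + 4ρ|N_i|)L − |r_i|` then `T_X(x_i^{k+1}) = L`. -/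
theorem stmt_9 (n : ℕ) (Δ L ρ : ℝ) (hΔ : 0 < Δ) (hρ : 0 < ρ)
    (K : ℕ) (hK : 1 ≤ K) (hL : L = K * Δ)
    (N : Fin n → Finset (Fin n)) (r : Fin n → ℝ)
    (Q TX Qb : ℝ → ℝ)
    (hTX : ∀ x : ℝ, TX x = max (-L) (min L x))
    (hQ : ∀ x : ℝ, ∃ t : ℤ, Q x = t * Δ ∧ (t - 1/2) * Δ < x ∧ x ≤ (t + 1/2) * Δ)
    (hQb : Qb = Q ∘ TX)
    (x α : ℕ → Fin n → ℝ)
    (hxup : ∀ k i, x (k+1) i = (1 / (1 + 2 * ρ * (N i).card)) *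
      (ρ * (N i).card * Qb (x k i) + ρ * ∑ j ∈ N i, Qb (x k j) - α k i + r i)) :
    ∀ k i,
      (α k i > (1 + 4 * ρ * (N i).card) * L + |r i| → TX (x (k+1) i) = -L) ∧
      (α k i < -((1 + 4 * ρ * (N i).card) * L) - |r i| → TX (x (k+1) i) = L) :=
  stmt_9_general n Δ L ρ hΔ hρ K hL N r Q TX Qb hTX hQ hQb x α hxup
end

section
/- If the BQ-CADMM state cycles with period T (so α^{k+T} = α^k), then ∑_{l=1}^T Q_b(x^{k+l}) lies in the span of the all-ones vector; equivalently, the sample average over one period (1/T)∑_{l=1}^T Q_b(x_i^{k+l}) is the same value x̄_Q^* for every node i. -/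
open Matrix

theorem sum_range_increments_eq_zero_of_return {M : Type*} [AddCommGroup M] {α d : ℕ → M}
    (hα : ∀ k, α (k + 1) = α k + d (k + 1)) {k0 T : ℕ} (hret : α (k0 + T) = α k0) :
    ∑ l ∈ Finset.range T, d (k0 + l + 1) = 0 := by
  have hd : ∀ l, d (k0 + l + 1) = α (k0 + (l + 1)) - α (k0 + l) := by
    intro l
    rw [← add_assoc, hα]
    abel
  simp only [hd, Finset.sum_range_sub (fun l => α (k0 + l)), add_zero, hret, sub_self]

theorem stmt_14_general (n : ℕ) (ρ : ℝ) (hρ : 0 < ρ) (T k0 : ℕ)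
    (Lm : Matrix (Fin n) (Fin n) ℝ)
    (hker : ∀ v : Fin n → ℝ, Lm.mulVec v = 0 ↔ ∃ c : ℝ, v = fun _ => c)
    (qb α : ℕ → Fin n → ℝ)
    (hup : ∀ k, α (k + 1) = α k + ρ • Lm.mulVec (qb (k + 1)))
    (hcyc : α (k0 + T) = α k0) :
    (∃ c : ℝ, (fun i => ∑ l ∈ Finset.range T, qb (k0 + l + 1) i) = fun _ => c) ∧
      ∃ xbarQ : ℝ, ∀ i, (1 / (T : ℝ)) * ∑ l ∈ Finset.range T, qb (k0 + l + 1) i = xbarQ := by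
  have hsum : Lm *ᵥ ∑ l ∈ Finset.range T, qb (k0 + l + 1) = 0 := by
    have h := sum_range_increments_eq_zero_of_return (d := fun k => ρ • Lm *ᵥ qb k) hup hcyc
    rw [← Finset.smul_sum, ← Matrix.mulVec_sum] at h
    exact (smul_eq_zero.mp h).resolve_left hρ.ne'
  obtain ⟨c, hc⟩ := (hker _).mp hsum
  have hconst : (fun i => ∑ l ∈ Finset.range T, qb (k0 + l + 1) i) = fun _ => c := by
    simpa only [Finset.sum_fn] using hc
  exact ⟨⟨c, hconst⟩, 1 / T * c, fun i => by rw [congrFun hconst i]⟩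

/-- If the BQ-CADMM state cycles with period `T` (so `α^{k₀+T} = α^{k₀}`), then
`∑_{l=1}^T Q_b(x^{k₀+l})` lies in the span of the all-ones vector; equivalently, the
sample average over one period `(1/T)∑_{l=1}^T Q_b(x_i^{k₀+l})` is the same value for
every node `i`. -/
theorem stmt_14 (n : ℕ) (ρ : ℝ) (hρ : 0 < ρ) (T k0 : ℕ) (hT : 2 ≤ T)
    (Lm : Matrix (Fin n) (Fin n) ℝ)
    (hker : ∀ v : Fin n → ℝ, Lm.mulVec v = 0 ↔ ∃ c : ℝ, v = fun _ => c)
    (qb α : ℕ → Fin n → ℝ)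
    (hup : ∀ k, α (k + 1) = α k + ρ • Lm.mulVec (qb (k + 1)))
    (hcyc : α (k0 + T) = α k0) :
    (∃ c : ℝ, (fun i => ∑ l ∈ Finset.range T, qb (k0 + l + 1) i) = fun _ => c) ∧
      ∃ xbarQ : ℝ, ∀ i, (1 / (T : ℝ)) * ∑ l ∈ Finset.range T, qb (k0 + l + 1) i = xbarQ :=
  stmt_14_general n ρ hρ T k0 Lm hker qb α hup hcyc
end

section
/- When BQ-CADMM converges, the consensus quantization value x_Q^* satisfies |x_Q^* − T_X(r̄)| ≤ (1 + 4ρ m/n)·(Δ/2), where r̄ is the data average, T_X is the projection onto [−L, L], and the bound is independent of the agents' data and the network size beyond the edge density m/n. -/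
/-!
At a fixed point of BQ-CADMM every agent quantizes to the common value `x_Q^*`, so the
`x`-update at node `i` reads `(1 + 2ρ dᵢ)(xᵢ - x_Q^*) = rᵢ - αᵢ - x_Q^*`. The dual variables
move along the Laplacian, which has zero column sums, so `∑ αᵢ = 0`; summing and dividing by `n`
writes `r̄ - x_Q^*` as a combination of the `xᵢ - x_Q^*` with nonnegative weights of total mass
`1 + 4ρ m / n`. Each `xᵢ` lies within `Δ/2` of `x_Q^*` after clipping to `[-L, L]`, and clipping
only moves a point towards the clipping range, which transfers the bound to `T_X(r̄)`.
-/

open Finset Matrix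

theorem max_min_le_max_max_min (a b y z : ℝ) : max a (min b y) ≤ max y (max a (min b z)) := by
  grind

theorem min_max_min_le_max_min (a b y z : ℝ) : min y (max a (min b z)) ≤ max a (min b y) := by
  grind

theorem abs_mul_sub_le_half {t Δ y : ℝ} (hlo : (t - 1 / 2) * Δ < y) (hhi : y ≤ (t + 1 / 2) * Δ) :
    |t * Δ - y| ≤ Δ / 2 :=
  abs_le.mpr ⟨by linarith, by linarith⟩

theorem sub_sum_mul_le_of_forall_sub_le {ι : Type*} [Fintype ι] [Nonempty ι] {T : ℝ → ℝ}
    (hT_le : ∀ y z, T y ≤ max y (T z)) (hle_T : ∀ y z, min y (T z) ≤ T y)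
    {μ X : ι → ℝ} {c q δ : ℝ} (hμ : ∀ i, 0 ≤ μ i) (hs : 1 ≤ ∑ i, μ i)
    (hc : c - q = ∑ i, μ i * (X i - q)) (hδ : 0 ≤ δ) (hnear : ∀ i, q - δ ≤ T (X i)) :
    q - (∑ i, μ i) * δ ≤ T c := by
  have hsδ : δ ≤ (∑ i, μ i) * δ := le_mul_of_one_le_left hδ hs
  by_cases hTc : q - δ ≤ T c
  · linarith
  -- Now `T c` lies below every `T (X i)`, which forces `T (X i) ≤ X i`.
  have hX : ∀ i, -δ ≤ X i - q := fun i => by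
    have := hT_le (X i) c
    have := hnear i
    grind
  have hcq : -((∑ i, μ i) * δ) ≤ c - q := by
    rw [hc, sum_mul, ← sum_neg_distrib]
    exact sum_le_sum fun i _ => by nlinarith [hμ i, hX i]
  obtain ⟨j⟩ := ‹Nonempty ι›
  calc q - (∑ i, μ i) * δ ≤ min c (T (X j)) := le_min (by linarith) (by linarith [hnear j])
    _ ≤ T c := hle_T c (X j)

theorem abs_sub_le_sum_mul_of_forall_abs_sub_le {ι : Type*} [Fintype ι] [Nonempty ι]
    {T : ℝ → ℝ} (hT_le : ∀ y z, T y ≤ max y (T z)) (hle_T : ∀ y z, min y (T z) ≤ T y)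
    {μ X : ι → ℝ} {c q δ : ℝ} (hμ : ∀ i, 0 ≤ μ i) (hs : 1 ≤ ∑ i, μ i)
    (hc : c - q = ∑ i, μ i * (X i - q)) (hnear : ∀ i, |q - T (X i)| ≤ δ) :
    |q - T c| ≤ (∑ i, μ i) * δ := by
  have hδ : 0 ≤ δ := (abs_nonneg _).trans (hnear (Classical.arbitrary ι))
  have hlow := sub_sum_mul_le_of_forall_sub_le hT_le hle_T hμ hs hc hδ
    fun i => by linarith [(abs_le.mp (hnear i)).2]
  have hc' : -c - -q = ∑ i, μ i * ((-X) i - -q) := by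
    simp only [Pi.neg_apply, neg_sub_neg]
    rw [← neg_sub c q, hc, ← sum_neg_distrib]
    simp only [← mul_neg, neg_sub]
  have hhigh := sub_sum_mul_le_of_forall_sub_le (T := fun y => -T (-y))
    (fun y z => by have := hle_T (-y) (-z); grind)
    (fun y z => by have := hT_le (-y) (-z); grind) hμ hs hc' hδ
    fun i => by simp only [Pi.neg_apply, neg_neg]; linarith [(abs_le.mp (hnear i)).1]
  simp only [neg_neg] at hhigh
  exact abs_le.mpr ⟨by linarith, by linarith⟩

theorem SimpleGraph.sum_lapMatrix_mulVec {V R : Type*} [Fintype V] [DecidableEq V] [CommRing R]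
    (G : SimpleGraph V) [DecidableRel G.Adj] (v : V → R) :
    ∑ i, (G.lapMatrix R *ᵥ v) i = 0 := by
  have hsum : ∑ i, (G.lapMatrix R *ᵥ v) i = (fun _ => 1) ⬝ᵥ (G.lapMatrix R *ᵥ v) := by
    simp [dotProduct]
  rw [hsum, dotProduct_mulVec, ← mulVec_transpose, (G.isSymm_lapMatrix R).eq,
    G.lapMatrix_mulVec_const_eq_zero, zero_dotProduct]

theorem SimpleGraph.sum_eq_zero_of_lapMatrix_increments {V : Type*} [Fintype V] [DecidableEq V]
    (G : SimpleGraph V) [DecidableRel G.Adj] (ρ : ℝ) (v α : ℕ → V → ℝ)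
    (h0 : ∀ i, α 0 i = 0) (hstep : ∀ k i, α (k + 1) i = α k i + ρ * (G.lapMatrix ℝ *ᵥ v (k + 1)) i)
    (k : ℕ) : ∑ i, α k i = 0 := by
  induction k with
  | zero => simp [h0]
  | succ k ih => simp only [hstep, sum_add_distrib, ← mul_sum, G.sum_lapMatrix_mulVec, ih]; simp

theorem SimpleGraph.sum_card_neighborFinset {V : Type*} [Fintype V] (G : SimpleGraph V)
    [DecidableRel G.Adj] : ∑ i, (#(G.neighborFinset i) : ℝ) = 2 * #G.edgeFinset := by
  simp only [G.card_neighborFinset_eq_degree]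
  exact_mod_cast G.sum_degrees_eq_twice_card_edges

theorem mul_sub_eq_of_eq_one_div_mul {d ρ y q a r : ℝ} (hw : 0 < 1 + 2 * ρ * d)
    (h : y = 1 / (1 + 2 * ρ * d) * (ρ * d * q + ρ * (d * q) - a + r)) :
    (1 + 2 * ρ * d) * (y - q) = r - a - q := by
  rw [h]
  field_simp
  ring

theorem sum_div_card_sub_eq_sum_mul {ι : Type*} [Fintype ι] [Nonempty ι] {w y r a : ι → ℝ}
    {q : ℝ} (ha : ∑ i, a i = 0) (h : ∀ i, w i * (y i - q) = r i - a i - q) :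
    (∑ i, r i) / Fintype.card ι - q = ∑ i, w i / Fintype.card ι * (y i - q) := by
  simp only [div_mul_eq_mul_div, ← sum_div, h, sum_sub_distrib, ha, sum_const, card_univ,
    nsmul_eq_mul]
  field_simp
  ring

theorem stmt_16_general (n m : ℕ) (hn : 0 < n) (G : SimpleGraph (Fin n)) [DecidableRel G.Adj]
    (hm : G.edgeFinset.card = m)
    (Δ L ρ : ℝ) (hρ : 0 < ρ)
    (r : Fin n → ℝ)
    (Q TX Qb : ℝ → ℝ)
    (hTX : ∀ x : ℝ, TX x = max (-L) (min L x))
    (hQ : ∀ x : ℝ, ∃ t : ℤ, Q x = t * Δ ∧ (t - 1/2) * Δ < x ∧ x ≤ (t + 1/2) * Δ)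
    (hQb : Qb = Q ∘ TX)
    (x α : ℕ → Fin n → ℝ)
    (hα0 : ∀ i, α 0 i = 0)
    (hxup : ∀ k i, x (k+1) i = (1 / (1 + 2 * ρ * (G.neighborFinset i).card)) *
      (ρ * (G.neighborFinset i).card * Qb (x k i)
        + ρ * ∑ j ∈ G.neighborFinset i, Qb (x k j) - α k i + r i))
    (hαup : ∀ k i, α (k+1) i = α k i +
      ρ * ((G.neighborFinset i).card * Qb (x (k+1) i)
        - ∑ j ∈ G.neighborFinset i, Qb (x (k+1) j)))
    (k0 : ℕ) (xQ : ℝ)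
    (hconv : ∀ k ≥ k0, (∀ i, Qb (x k i) = xQ) ∧ x k = x k0 ∧ α k = α k0) :
    |xQ - TX ((∑ i, r i) / n)| ≤ (1 + 4 * ρ * m / n) * (Δ / 2) := by
  obtain rfl : TX = fun y => max (-L) (min L y) := funext hTX
  have : Nonempty (Fin n) := ⟨⟨0, hn⟩⟩
  set w : Fin n → ℝ := fun i => 1 + 2 * ρ * #(G.neighborFinset i)
  have hw : ∀ i, 0 < w i := fun i => by positivity
  obtain ⟨hQx, -, -⟩ := hconv k0 le_rfl
  have hαsum := G.sum_eq_zero_of_lapMatrix_increments ρ (fun k i => Qb (x k i)) α hα0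
    (fun k i => by
      rw [G.lapMatrix_mulVec_apply, ← G.card_neighborFinset_eq_degree]
      exact hαup k i) k0
  have hstat : ∀ i, w i * (x k0 i - xQ) = r i - α k0 i - xQ := fun i => by
    have h := hxup k0 i
    rw [(hconv (k0 + 1) k0.le_succ).2.1, hQx i, sum_congr rfl fun j _ => hQx j, sum_const,
      nsmul_eq_mul] at h
    exact mul_sub_eq_of_eq_one_div_mul (hw i) h
  have hnear : ∀ i, |xQ - max (-L) (min L (x k0 i))| ≤ Δ / 2 := fun i => by
    obtain ⟨t, hQt, hlo, hhi⟩ := hQ (max (-L) (min L (x k0 i)))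
    rw [← hQx i, hQb, Function.comp_apply, hQt]
    exact abs_mul_sub_le_half hlo hhi
  have hmass : ∑ i, w i / n = 1 + 4 * ρ * m / n := by
    rw [← sum_div, sum_add_distrib, ← mul_sum, G.sum_card_neighborFinset, hm]
    simp only [sum_const, card_univ, Fintype.card_fin, nsmul_eq_mul, mul_one]
    field_simp
    ring
  have hc := sum_div_card_sub_eq_sum_mul hαsum hstat
  rw [Fintype.card_fin] at hc
  rw [← hmass]
  exact abs_sub_le_sum_mul_of_forall_abs_sub_le (fun y z => max_min_le_max_max_min _ _ _ _)
    (fun y z => min_max_min_le_max_min _ _ _ _) (fun i => div_nonneg (hw i).le n.cast_nonneg)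
    (hmass ▸ le_add_of_nonneg_right (by positivity)) hc hnear

/-- When BQ-CADMM (on a connected graph with `n` nodes and `m` edges, parameter `ρ`,
resolution `Δ`, quantizer range `[−L, L]` with `L` a multiple of `Δ`, initialized at
zero) converges, the consensus quantization value `x_Q^*` satisfies
`|x_Q^* − T_X(r̄)| ≤ (1 + 4ρ m/n)·(Δ/2)`, where `r̄` is the data average. -/
theorem stmt_16 (n m : ℕ) (hn : 0 < n) (G : SimpleGraph (Fin n)) [DecidableRel G.Adj]
    (hconn : G.Connected) (hm : G.edgeFinset.card = m)
    (Δ L ρ : ℝ) (hΔ : 0 < Δ) (hρ : 0 < ρ) (K : ℕ) (hK : 1 ≤ K) (hL : L = K * Δ)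
    (r : Fin n → ℝ)
    (Q TX Qb : ℝ → ℝ)
    (hTX : ∀ x : ℝ, TX x = max (-L) (min L x))
    (hQ : ∀ x : ℝ, ∃ t : ℤ, Q x = t * Δ ∧ (t - 1/2) * Δ < x ∧ x ≤ (t + 1/2) * Δ)
    (hQb : Qb = Q ∘ TX)
    (x α : ℕ → Fin n → ℝ)
    (hx0 : ∀ i, x 0 i = 0) (hα0 : ∀ i, α 0 i = 0)
    (hxup : ∀ k i, x (k+1) i = (1 / (1 + 2 * ρ * (G.neighborFinset i).card)) *
      (ρ * (G.neighborFinset i).card * Qb (x k i)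
        + ρ * ∑ j ∈ G.neighborFinset i, Qb (x k j) - α k i + r i))
    (hαup : ∀ k i, α (k+1) i = α k i +
      ρ * ((G.neighborFinset i).card * Qb (x (k+1) i)
        - ∑ j ∈ G.neighborFinset i, Qb (x (k+1) j)))
    (k0 : ℕ) (xQ : ℝ)
    (hconv : ∀ k ≥ k0, (∀ i, Qb (x k i) = xQ) ∧ x k = x k0 ∧ α k = α k0) :
    |xQ - TX ((∑ i, r i) / n)| ≤ (1 + 4 * ρ * m / n) * (Δ / 2) :=
  stmt_16_general n m hn G hm Δ L ρ hρ r Q TX Qb hTX hQ hQb x α hα0 hxup hαup k0 xQ hconv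
end

section
/- If |r̄| − L > (1 + 4ρ m/n)·Γ_0, where Γ_0 = max{Δ/2, 4ρnL/(1 + 2ρn)}, then BQ-CADMM must converge (rather than cycle) to a consensus quantization level in Λ_X; moreover, if additionally ρ < n/(4m), then the consensus value equals sgn(r̄)·L. -/
/-!
A cycle of BQ-CADMM has a sample average of quantized values, which lie in `[-L, L]`, so that
average is at distance at least `|r̄| - L` from `r̄`, more than Theorem 2 allows; hence the
algorithm converges. When `ρ < n/(4m)` the convergence error bound is below `Δ`, and since
`|r̄| > L` the target `T_X(r̄) = sgn(r̄)·L` is itself a lattice point, so the two lattice points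
coincide.
-/

lemma eq_of_abs_sub_lt_of_mem_lattice {Δ a b : ℝ} (hΔ : 0 < Δ)
    (ha : ∃ t : ℤ, a = t * Δ) (hb : ∃ s : ℤ, b = s * Δ) (hab : |a - b| < Δ) : a = b := by
  obtain ⟨t, rfl⟩ := ha
  obtain ⟨s, rfl⟩ := hb
  have hts : |((t - s : ℤ) : ℝ)| < 1 := by
    rw [← mul_lt_mul_iff_left₀ hΔ, one_mul, ← abs_of_pos hΔ, ← abs_mul, abs_of_pos hΔ]
    push_cast
    rwa [sub_mul]
  rw [← Int.cast_abs, ← Int.cast_one, Int.cast_lt, Int.abs_lt_one_iff, sub_eq_zero] at hts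
  rw [hts]

lemma sign_mul_mem_lattice (r Δ : ℝ) (K : ℕ) : ∃ s : ℤ, Real.sign r * (K * Δ) = s * Δ := by
  rcases Real.sign_apply_eq r with h | h | h <;> rw [h]
  · exact ⟨-K, by push_cast; ring⟩
  · exact ⟨0, by simp⟩
  · exact ⟨K, by simp⟩

lemma max_neg_min_eq_sign_mul {L r : ℝ} (hL : 0 ≤ L) (hr : L < |r|) :
    max (-L) (min L r) = Real.sign r * L := by
  rcases lt_abs.mp hr with hpos | hneg
  · rw [Real.sign_of_pos (hL.trans_lt hpos), min_eq_left hpos.le, max_eq_right (by linarith)]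
    ring
  · rw [Real.sign_of_neg (by linarith), min_eq_right (by linarith), max_eq_left (by linarith)]
    ring

lemma abs_sum_range_div_le {f : ℕ → ℝ} {L : ℝ} (T : ℕ) (hf : ∀ l, |f l| ≤ L) :
    |(∑ l ∈ Finset.range T, f l) / T| ≤ L := by
  rcases T.eq_zero_or_pos with rfl | hT
  · simpa using (abs_nonneg (f 0)).trans (hf 0)
  have hT' : (0 : ℝ) < T := Nat.cast_pos.mpr hT
  rw [abs_div, Nat.abs_cast, div_le_iff₀ hT']
  calc |∑ l ∈ Finset.range T, f l|
      ≤ ∑ l ∈ Finset.range T, |f l| := Finset.abs_sum_le_sum_abs _ _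
    _ ≤ ∑ _l ∈ Finset.range T, L := Finset.sum_le_sum fun l _ => hf l
    _ = L * T := by rw [Finset.sum_const, Finset.card_range, nsmul_eq_mul, mul_comm]

lemma four_mul_mul_div_lt_one {ρ m n : ℝ} (hm : 0 ≤ m) (hn : 0 < n) (hρ : ρ < n / (4 * m)) :
    4 * ρ * m / n < 1 := by
  rw [div_lt_one hn]
  rcases hm.eq_or_lt with rfl | hm
  · simpa using hn
  · rw [lt_div_iff₀ (by positivity)] at hρ
    linarith

theorem stmt_18_general (n m : ℕ) (hn : 0 < n)
    (Δ L ρ : ℝ) (hΔ : 0 < Δ) (K : ℕ) (hL : L = K * Δ)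
    (rbar : ℝ)
    (TX Qb : ℝ → ℝ)
    (hTX : ∀ x : ℝ, TX x = max (-L) (min L x))
    (hQbL : ∀ x : ℝ, |Qb x| ≤ L)
    (x : ℕ → Fin n → ℝ)
    (Γ0 : ℝ) (hΓ0 : Γ0 = max (Δ / 2) (4 * ρ * n * L / (1 + 2 * ρ * n)))
    -- Theorem 2 dichotomy:
    (hdich :
      (∃ k0 : ℕ, ∃ xQ : ℝ, (∃ t : ℤ, xQ = t * Δ) ∧ |xQ| ≤ L ∧
        (∀ k ≥ k0, ∀ i, Qb (x k i) = xQ) ∧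
        |xQ - TX rbar| ≤ (1 + 4 * ρ * m / n) * (Δ / 2)) ∨
      (∃ k0 T : ℕ, 2 ≤ T ∧ (∀ k ≥ k0, ∀ i, x (k + T) i = x k i) ∧
        ∃ xbarQ : ℝ,
          (∀ k ≥ k0, ∀ i, (∑ l ∈ Finset.range T, Qb (x (k + l + 1) i)) / T = xbarQ) ∧
          |xbarQ - rbar| ≤ (1 + 4 * ρ * m / n) * Γ0))
    (hfar : |rbar| - L > (1 + 4 * ρ * m / n) * Γ0) :
    ∃ k0 : ℕ, ∃ xQ : ℝ, (∃ t : ℤ, xQ = t * Δ) ∧ |xQ| ≤ L ∧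
      (∀ k ≥ k0, ∀ i, Qb (x k i) = xQ) ∧
      |xQ - TX rbar| ≤ (1 + 4 * ρ * m / n) * (Δ / 2) ∧
      (ρ < n / (4 * m) → xQ = Real.sign rbar * L) := by
  rcases hdich with ⟨k0, xQ, hxQ, hxQL, hconv, herr⟩ | ⟨k0, T, -, -, xbarQ, hbar, herr⟩
  · refine ⟨k0, xQ, hxQ, hxQL, hconv, herr, fun hρ => ?_⟩
    have hn' : (0 : ℝ) < n := Nat.cast_pos.mpr hn
    have hc : 4 * ρ * m / n < 1 := four_mul_mul_div_lt_one (Nat.cast_nonneg m) hn' hρ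
    have hc0 : 0 ≤ (1 + 4 * ρ * m / n) * Γ0 := by
      have hΓ0pos : 0 < Γ0 := hΓ0 ▸ lt_max_of_lt_left (half_pos hΔ)
      nlinarith [abs_nonneg (xQ - TX rbar)]
    have hL0 : 0 ≤ L := hL ▸ by positivity
    rw [hTX, max_neg_min_eq_sign_mul hL0 (by linarith)] at herr
    refine eq_of_abs_sub_lt_of_mem_lattice hΔ hxQ (hL ▸ sign_mul_mem_lattice rbar Δ K) ?_
    nlinarith
  · have hxbar : |xbarQ| ≤ L := hbar k0 le_rfl ⟨0, hn⟩ ▸ abs_sum_range_div_le T fun _ => hQbL _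
    have := abs_sub_abs_le_abs_sub rbar xbarQ
    rw [abs_sub_comm] at this
    linarith

/-- If `|r̄| − L > (1 + 4ρ m/n)·Γ₀` with `Γ₀ = max{Δ/2, 4ρnL/(1 + 2ρn)}`, then BQ-CADMM
must converge (rather than cycle) to a consensus quantization level in `Λ_X`; moreover,
if additionally `ρ < n/(4m)`, then the consensus value equals `sgn(r̄)·L`. The Theorem-2
dichotomy (convergence with its error bound, or cycling with its error bound) is taken
as a hypothesis. -/
theorem stmt_18 (n m : ℕ) (hn : 0 < n) (hm : 0 < m)
    (Δ L ρ : ℝ) (hΔ : 0 < Δ) (hρ : 0 < ρ) (K : ℕ) (hK : 1 ≤ K) (hL : L = K * Δ)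
    (r : Fin n → ℝ) (rbar : ℝ) (hrbar : rbar = (∑ i, r i) / n)
    (TX Qb : ℝ → ℝ)
    (hTX : ∀ x : ℝ, TX x = max (-L) (min L x))
    (hQbL : ∀ x : ℝ, |Qb x| ≤ L)
    (x : ℕ → Fin n → ℝ)
    (Γ0 : ℝ) (hΓ0 : Γ0 = max (Δ / 2) (4 * ρ * n * L / (1 + 2 * ρ * n)))
    -- Theorem 2 dichotomy:
    (hdich :
      (∃ k0 : ℕ, ∃ xQ : ℝ, (∃ t : ℤ, xQ = t * Δ) ∧ |xQ| ≤ L ∧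
        (∀ k ≥ k0, ∀ i, Qb (x k i) = xQ) ∧
        |xQ - TX rbar| ≤ (1 + 4 * ρ * m / n) * (Δ / 2)) ∨
      (∃ k0 T : ℕ, 2 ≤ T ∧ (∀ k ≥ k0, ∀ i, x (k + T) i = x k i) ∧
        ∃ xbarQ : ℝ,
          (∀ k ≥ k0, ∀ i, (∑ l ∈ Finset.range T, Qb (x (k + l + 1) i)) / T = xbarQ) ∧
          |xbarQ - rbar| ≤ (1 + 4 * ρ * m / n) * Γ0))
    (hfar : |rbar| - L > (1 + 4 * ρ * m / n) * Γ0) :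
    ∃ k0 : ℕ, ∃ xQ : ℝ, (∃ t : ℤ, xQ = t * Δ) ∧ |xQ| ≤ L ∧
      (∀ k ≥ k0, ∀ i, Qb (x k i) = xQ) ∧
      |xQ - TX rbar| ≤ (1 + 4 * ρ * m / n) * (Δ / 2) ∧
      (ρ < n / (4 * m) → xQ = Real.sign rbar * L) :=
  stmt_18_general n m hn Δ L ρ hΔ K hL rbar TX Qb hTX hQbL x Γ0 hΓ0 hdich hfar
end
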